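/- (Asymptotics of the single-interval Fisher information.) For reals γ > 0 and T > 0, define F(γ, T) = 1 − γ² − √(1 − e^{−2γT}) + γ²/√(1 − e^{−2γT}). Then, as the natural number k tends to infinity, F(γ, T/k)/√k converges to γ^{3/2}/√(2T); i.e., the sequence k ↦ F(γ, T/k)/√k tends to √(γ³/(2T)). -/

import Mathlib

/-!
For small `t`, `s(t) = √(1 - e^{-2γt}) ≈ √(2γt)`, so in
`F(γ, t) = 1 - γ² - s(t) + γ²/s(t)` the last term dominates: at `t = T/k` it is
`γ²/√(2γT/k) = √k · √(γ³/(2T))`, while the other terms are `O(1)`.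
-/

/-- The classical Fisher information
`F(γ,T) = 1 − γ² − √(1 − e^{−2γT}) + γ²/√(1 − e^{−2γT})` for estimating the
duration `T` on a clock qubit with dephasing rate `γ`. -/
noncomputable def Floc (γ T : ℝ) : ℝ :=
  1 - γ^2 - Real.sqrt (1 - Real.exp (-2*γ*T))
    + γ^2 / Real.sqrt (1 - Real.exp (-2*γ*T))

open Filter Topology Real

theorem tendsto_mul_one_sub_exp_neg_div_atTop {c : ℝ} (hc : c ≠ 0) :
    Tendsto (fun x : ℝ => x * (1 - exp (-c / x))) atTop (𝓝 c) := by
  have hslope : Tendsto (fun t : ℝ => t⁻¹ * (exp t - 1)) (𝓝[≠] 0) (𝓝 1) := by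
    simpa using hasDerivAt_iff_tendsto_slope_zero.mp (hasDerivAt_exp 0)
  have hstep : Tendsto (fun x : ℝ => -c / x) atTop (𝓝[≠] 0) := by
    refine tendsto_nhdsWithin_of_tendsto_nhds_of_eventually_within _
      (tendsto_const_nhds.div_atTop tendsto_id) ?_
    filter_upwards [eventually_gt_atTop 0] with x hx
    exact div_ne_zero (neg_ne_zero.mpr hc) hx.ne'
  -- `x (1 - e^{-c/x}) = c · t⁻¹ (e^t - 1)` at `t = -c/x`
  have hlim := (hslope.comp hstep).const_mul c
  rw [mul_one] at hlim
  refine hlim.congr' ?_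
  filter_upwards [eventually_gt_atTop 0] with x hx
  simp only [Function.comp_apply]
  field_simp
  ring

theorem tendsto_sqrt_one_sub_exp_neg_div_mul_sqrt_atTop {c : ℝ} (hc : c ≠ 0) :
    Tendsto (fun x : ℝ => √(1 - exp (-c / x)) * √x) atTop (𝓝 √c) := by
  refine ((continuous_sqrt.tendsto c).comp (tendsto_mul_one_sub_exp_neg_div_atTop hc)).congr' ?_
  filter_upwards [eventually_ge_atTop 0] with x hx
  rw [Function.comp_apply, mul_comm x, sqrt_mul' _ hx]

theorem Floc_div_sqrt (γ T : ℝ) {x : ℝ} (hx : 0 < x) :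
    Floc γ (T / x) / √x = (1 - γ ^ 2) / √x - √(1 - exp (-(2 * γ * T) / x)) * √x / x
      + γ ^ 2 / (√(1 - exp (-(2 * γ * T) / x)) * √x) := by
  have hr0 : √x ≠ 0 := (sqrt_pos.mpr hx).ne'
  rw [Floc, show -2 * γ * (T / x) = -(2 * γ * T) / x by ring]
  generalize √(1 - exp (-(2 * γ * T) / x)) = s
  field_simp
  rw [sq_sqrt hx.le]
  ring

theorem sq_div_sqrt_eq_sqrt_cube_div {γ T : ℝ} (hγ : 0 < γ) (hT : 0 < T) :
    γ ^ 2 / √(2 * γ * T) = √(γ ^ 3 / (2 * T)) := by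
  rw [show γ ^ 3 / (2 * T) = (γ ^ 2) ^ 2 / (2 * γ * T) by field_simp,
    sqrt_div' _ (by positivity), sqrt_sq (by positivity)]

theorem tendsto_Floc_div_sqrt_atTop {γ T : ℝ} (hγ : 0 < γ) (hT : 0 < T) :
    Tendsto (fun x : ℝ => Floc γ (T / x) / √x) atTop (𝓝 √(γ ^ 3 / (2 * T))) := by
  have hs := tendsto_sqrt_one_sub_exp_neg_div_mul_sqrt_atTop (c := 2 * γ * T) (by positivity)
  have hlim := ((tendsto_const_nhds (x := 1 - γ ^ 2)).div_atTop tendsto_sqrt_atTop).sub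
    (hs.div_atTop tendsto_id) |>.add
    ((tendsto_const_nhds (x := γ ^ 2)).div hs (sqrt_ne_zero'.mpr (by positivity)))
  rw [sub_zero, zero_add, sq_div_sqrt_eq_sqrt_cube_div hγ hT] at hlim
  refine hlim.congr' ?_
  filter_upwards [eventually_gt_atTop 0] with x hx
  exact (Floc_div_sqrt γ T hx).symm

/-- Asymptotics of the single-interval Fisher information:
`F(γ, T/k)/√k → γ^{3/2}/√(2T) = √(γ³/(2T))` as `k → ∞`. -/
theorem stmt_14 (γ T : ℝ) (hγ : 0 < γ) (hT : 0 < T) :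
    Filter.Tendsto (fun k : ℕ => Floc γ (T / k) / Real.sqrt k)
      Filter.atTop (nhds (Real.sqrt (γ^3 / (2*T)))) :=
  (tendsto_Floc_div_sqrt_atTop hγ hT).comp tendsto_natCast_atTop_atTop
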